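/- Turán's sieve inequality: Let A be a finite set, P a finite set of primes, and for each p ∈ P let A_p ⊆ A. Suppose for each p ∈ P we have |A_p| = δ_p |A| + R_p with 0 ≤ δ_p < 1, and for each pair p, q ∈ P we have |A_p ∩ A_q| = δ_p δ_q |A| + R_{p,q} (with R_{p,p} interpreted via |A_p| = δ_p^2|A| + R_{p,p}). Set U = ∑_{p ∈ P} δ_p and assume U > 0. Then the number S of elements of A lying in no A_p satisfies S ≤ |A|/U + (2/U) ∑_{p ∈ P} |R_p| + (1/U²) ∑_{p,q ∈ P} |R_{p,q}|. -/

import Mathlib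

/-!
Let `N a` count the sets `A_p` containing `a`. Expanding the square and double counting gives the
exact identity `∑_{a ∈ A} (N a - U)² = ∑_{p,q} R_{p,q} - 2U ∑_p R_p`. Every sifted element has
`N a = 0` and so contributes `U²` to the left side, whence `U² S ≤ ∑ |R_{p,q}| + 2U ∑ |R_p|`.
-/

open Finset

namespace TuranSieve

theorem sum_sub_sq_eq {α : Type*} {f : α → ℝ} (A : Finset α) (c : ℝ) :
    ∑ a ∈ A, (f a - c) ^ 2 = ∑ a ∈ A, f a ^ 2 - 2 * c * ∑ a ∈ A, f a + c ^ 2 * #A := by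
  simp only [sub_sq, sum_add_distrib, sum_sub_distrib, sum_const, nsmul_eq_mul, mul_sum,
    mul_right_comm _ (f _)]
  ring

variable {α ι : Type*} [DecidableEq α]

def coverCount (P : Finset ι) (B : ι → Finset α) (a : α) : ℕ := #{p ∈ P | a ∈ B p}

theorem sum_coverCount (A : Finset α) (P : Finset ι) (B : ι → Finset α) :
    ∑ a ∈ A, coverCount P B a = ∑ p ∈ P, #(A ∩ B p) := by
  simp_rw [← filter_mem_eq_inter]
  exact sum_card_bipartiteAbove_eq_sum_card_bipartiteBelow (fun a p => a ∈ B p)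

theorem coverCount_sq (P : Finset ι) (B : ι → Finset α) (a : α) :
    coverCount P B a ^ 2 = coverCount (P ×ˢ P) (fun x => B x.1 ∩ B x.2) a := by
  rw [coverCount, coverCount, sq, ← card_product, ← filter_product]
  simp only [mem_inter]

theorem coverCount_eq_zero {P : Finset ι} {B : ι → Finset α} {a : α}
    (ha : a ∉ P.biUnion B) : coverCount P B a = 0 := by
  simp_all [coverCount]

theorem sum_sq_coverCount (A : Finset α) (P : Finset ι) (B : ι → Finset α) :
    ∑ a ∈ A, coverCount P B a ^ 2 = ∑ p ∈ P, ∑ q ∈ P, #(A ∩ (B p ∩ B q)) := by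
  simp_rw [coverCount_sq, sum_coverCount, sum_product]

variable (A : Finset α) (P : Finset ι) (B : ι → Finset α) (hsub : ∀ p ∈ P, B p ⊆ A)
  (δ R : ι → ℝ) (Rpq : ι → ι → ℝ)
include hsub

theorem sum_coverCount_eq (hR : ∀ p ∈ P, (#(B p) : ℝ) = δ p * #A + R p) :
    ∑ a ∈ A, (coverCount P B a : ℝ) = (∑ p ∈ P, δ p) * #A + ∑ p ∈ P, R p := by
  rw [← Nat.cast_sum, sum_coverCount, Nat.cast_sum, sum_mul, ← sum_add_distrib]
  refine sum_congr rfl fun p hp => ?_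
  rw [inter_eq_right.mpr (hsub p hp), hR p hp]

theorem sum_sq_coverCount_eq
    (hRpq : ∀ p ∈ P, ∀ q ∈ P, (#(B p ∩ B q) : ℝ) = δ p * δ q * #A + Rpq p q) :
    ∑ a ∈ A, (coverCount P B a : ℝ) ^ 2 =
      (∑ p ∈ P, δ p) ^ 2 * #A + ∑ p ∈ P, ∑ q ∈ P, Rpq p q := by
  simp_rw [← Nat.cast_pow]
  rw [← Nat.cast_sum, sum_sq_coverCount]
  push_cast
  rw [sq, sum_mul_sum, sum_mul, ← sum_add_distrib]
  refine sum_congr rfl fun p hp => ?_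
  rw [sum_mul, ← sum_add_distrib]
  refine sum_congr rfl fun q hq => ?_
  rw [inter_eq_right.mpr (inter_subset_left.trans (hsub p hp)), hRpq p hp q hq]

theorem sq_mul_card_sdiff_biUnion_le
    (hR : ∀ p ∈ P, (#(B p) : ℝ) = δ p * #A + R p)
    (hRpq : ∀ p ∈ P, ∀ q ∈ P, (#(B p ∩ B q) : ℝ) = δ p * δ q * #A + Rpq p q) :
    (∑ p ∈ P, δ p) ^ 2 * #(A \ P.biUnion B) ≤
      ∑ p ∈ P, ∑ q ∈ P, Rpq p q - 2 * (∑ p ∈ P, δ p) * ∑ p ∈ P, R p := by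
  set U := ∑ p ∈ P, δ p
  have variance : ∑ a ∈ A, ((coverCount P B a : ℝ) - U) ^ 2 =
      ∑ p ∈ P, ∑ q ∈ P, Rpq p q - 2 * U * ∑ p ∈ P, R p := by
    rw [sum_sub_sq_eq, sum_sq_coverCount_eq A P B hsub δ Rpq hRpq,
      sum_coverCount_eq A P B hsub δ R hR]
    ring
  calc U ^ 2 * #(A \ P.biUnion B)
      = ∑ a ∈ A \ P.biUnion B, ((coverCount P B a : ℝ) - U) ^ 2 := by
        rw [sum_congr rfl fun a ha => by rw [coverCount_eq_zero (mem_sdiff.mp ha).2]]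
        simp [mul_comm]
    _ ≤ ∑ a ∈ A, ((coverCount P B a : ℝ) - U) ^ 2 :=
        sum_le_sum_of_subset_of_nonneg sdiff_subset fun _ _ _ => sq_nonneg _
    _ = _ := variance

end TuranSieve

theorem turan_sieve_general {α : Type*} [DecidableEq α] (A : Finset α) (P : Finset ℕ)
    (Ap : ℕ → Finset α) (hsub : ∀ p ∈ P, Ap p ⊆ A)
    (δ : ℕ → ℝ) (R : ℕ → ℝ) (Rpq : ℕ → ℕ → ℝ)
    (hR : ∀ p ∈ P, ((Ap p).card : ℝ) = δ p * A.card + R p)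
    (hRpq : ∀ p ∈ P, ∀ q ∈ P, ((Ap p ∩ Ap q).card : ℝ) = δ p * δ q * A.card + Rpq p q)
    (hU : 0 < ∑ p ∈ P, δ p) :
    ((A \ P.biUnion Ap).card : ℝ) ≤
      (A.card : ℝ) / (∑ p ∈ P, δ p)
      + (2 / (∑ p ∈ P, δ p)) * ∑ p ∈ P, |R p|
      + (1 / (∑ p ∈ P, δ p) ^ 2) * ∑ p ∈ P, ∑ q ∈ P, |Rpq p q| := by
  have hsieve := TuranSieve.sq_mul_card_sdiff_biUnion_le A P Ap hsub δ R Rpq hR hRpq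
  set U := ∑ p ∈ P, δ p
  have hRpq_le : ∑ p ∈ P, ∑ q ∈ P, Rpq p q ≤ ∑ p ∈ P, ∑ q ∈ P, |Rpq p q| :=
    sum_le_sum fun p _ => sum_le_sum fun q _ => le_abs_self _
  have hR_le : -∑ p ∈ P, R p ≤ ∑ p ∈ P, |R p| :=
    (neg_le_abs _).trans (abs_sum_le_sum_abs _ _)
  have hsq : U ^ 2 * ((A \ P.biUnion Ap).card : ℝ) ≤
      ∑ p ∈ P, ∑ q ∈ P, |Rpq p q| + 2 * U * ∑ p ∈ P, |R p| := by
    linarith [mul_le_mul_of_nonneg_left hR_le (by positivity : (0 : ℝ) ≤ 2 * U)]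
  calc ((A \ P.biUnion Ap).card : ℝ)
      = U ^ 2 * ((A \ P.biUnion Ap).card : ℝ) / U ^ 2 := by field_simp
    _ ≤ (∑ p ∈ P, ∑ q ∈ P, |Rpq p q| + 2 * U * ∑ p ∈ P, |R p|) / U ^ 2 := by gcongr
    _ = (2 / U) * ∑ p ∈ P, |R p| + (1 / U ^ 2) * ∑ p ∈ P, ∑ q ∈ P, |Rpq p q| := by
        field_simp
        ring
    _ ≤ _ := by
        rw [add_assoc]
        exact le_add_of_nonneg_left (by positivity)

theorem turan_sieve {α : Type*} [DecidableEq α] (A : Finset α) (P : Finset ℕ)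
    (Ap : ℕ → Finset α) (hsub : ∀ p ∈ P, Ap p ⊆ A)
    (δ : ℕ → ℝ) (R : ℕ → ℝ) (Rpq : ℕ → ℕ → ℝ)
    (hδ : ∀ p ∈ P, 0 ≤ δ p ∧ δ p < 1)
    (hR : ∀ p ∈ P, ((Ap p).card : ℝ) = δ p * A.card + R p)
    (hRpq : ∀ p ∈ P, ∀ q ∈ P, ((Ap p ∩ Ap q).card : ℝ) = δ p * δ q * A.card + Rpq p q)
    (hU : 0 < ∑ p ∈ P, δ p) :
    ((A \ P.biUnion Ap).card : ℝ) ≤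
      (A.card : ℝ) / (∑ p ∈ P, δ p)
      + (2 / (∑ p ∈ P, δ p)) * ∑ p ∈ P, |R p|
      + (1 / (∑ p ∈ P, δ p) ^ 2) * ∑ p ∈ P, ∑ q ∈ P, |Rpq p q| :=
  turan_sieve_general A P Ap hsub δ R Rpq hR hRpq hU
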